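/- Let q be a prime power and l ≥ 2. Let S be the image in 𝔽_{q^l}^*/𝔽_q^* of {x ∈ 𝔽_{q^l}^* : tr_{q^l/q}(x) = 1} under the natural projection. Then S is a ((q^l-1)/(q-1), q^{l-1}, q^{l-2}(q-1))-difference set in the cyclic group 𝔽_{q^l}^*/𝔽_q^* (the Singer difference set). -/

import Mathlib

open Finset
open scoped Pointwise Classical

/-- The formal sum `∑_{x ∈ s} x` of a finite subset of a group in the
integral group ring `ℤ[G]`. -/
noncomputable def fsum {G : Type*} [Group G] [DecidableEq G] (s : Finset G) :
    MonoidAlgebra ℤ G :=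
  ∑ x ∈ s, MonoidAlgebra.single x 1

/-- The relative trace `x ↦ ∑_{i<l} x^{q^i}`. -/
def relTrace {F : Type*} [CommRing F] (q l : ℕ) (x : F) : F :=
  ∑ i ∈ Finset.range l, x ^ q ^ i

/-- The subgroup `𝔽_q^*` of `𝔽_{q^l}^*`. -/
def baseSubgroup (K F : Type*) [Field K] [Field F] [Algebra K F] : Subgroup Fˣ :=
  (Units.map (algebraMap K F : K →+* F).toMonoidHom).range

/-- The Singer difference set: the image in `𝔽_{q^l}^*/𝔽_q^*` of
`{x ∈ 𝔽_{q^l}^* : tr_{q^l/q}(x) = 1}`. -/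
noncomputable def singerDS (K F : Type*) [Field K] [Field F] [Fintype K]
    [Fintype F] [Algebra K F] (q l : ℕ) : Finset (Fˣ ⧸ baseSubgroup K F) :=
  ((univ : Finset Fˣ).filter (fun x : Fˣ => relTrace q l (x : F) = 1)).image
    (QuotientGroup.mk (s := baseSubgroup K F))
/-!
Up to `algebraMap`, `relTrace q l` is the trace `Tr` of `F/K`, a surjective `K`-linear form.
A coset `xK^*` lies in `D := singerDS K F q l` iff `Tr x ≠ 0` (rescale `x` by `(Tr x)⁻¹`), so
for `g = uK^*` the coefficient of `g` in `D D⁻¹`, which is `#(D ∩ gD)`, equals `1/(q-1)` times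
the number of `x ∈ F` with `Tr x ≠ 0` and `Tr (u⁻¹x) ≠ 0`. If `u ∈ K` this is the number of `x`
with `Tr x ≠ 0`, that is `(q-1)q^{l-1}`. If `u ∉ K` the forms `Tr` and `Tr (u⁻¹ ·)` are linearly
independent, so `x ↦ (Tr x, Tr (u⁻¹x))` maps `F` onto `K²` with fibres of size `q^{l-2}`, and
the count is `(q-1)²q^{l-2}`.
-/

lemma card_filter_comp_mul_card_of_surjective {G M Φ : Type*} [AddGroup G] [AddMonoid M]
    [Fintype G] [Fintype M] [DecidableEq M] [FunLike Φ G M] [AddMonoidHomClass Φ G M]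
    (f : Φ) (hf : Function.Surjective f) (p : M → Prop) [DecidablePred p] :
    #{x | p (f x)} * Fintype.card M = #{m | p m} * Fintype.card G := by
  have hfiber : ∀ m, #{x | f x = m} = #{x | f x = 0} := fun m =>
    AddMonoidHom.card_fiber_eq_of_mem_range f (hf m) (hf 0)
  have hpreimage : ∀ s : Finset M, #{x | f x ∈ s} = #s * #{x | f x = 0} := fun s => by
    rw [Finset.card_eq_sum_card_fiberwise (f := f) (t := s) fun x hx => by simpa using hx,
      Finset.sum_congr rfl fun m hm => ?_, Finset.sum_const, smul_eq_mul]
    rw [Finset.filter_filter, ← hfiber m]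
    congr 1
    ext x
    simp only [Finset.mem_filter, Finset.mem_univ, true_and, and_iff_right_iff_imp]
    rintro rfl
    exact hm
  have hp := hpreimage {m | p m}
  have huniv := hpreimage Finset.univ
  simp only [Finset.mem_filter, Finset.mem_univ, true_and, Finset.filter_true,
    Finset.card_univ] at hp huniv
  rw [hp, huniv]
  ring

lemma card_filter_units_val {G₀ : Type*} [GroupWithZero G₀] [Fintype G₀] {p : G₀ → Prop}
    [DecidablePred p] (h0 : ¬ p 0) : #{x : G₀ˣ | p x} = #{x : G₀ | p x} := by
  rw [← Finset.card_map ⟨Units.val, Units.val_injective⟩]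
  congr 1
  ext x
  simp only [Finset.mem_map, Finset.mem_filter, Finset.mem_univ, true_and,
    Function.Embedding.coeFn_mk]
  refine ⟨?_, fun hx => ⟨Units.mk0 x fun h => h0 (h ▸ hx), hx, rfl⟩⟩
  rintro ⟨u, hu, rfl⟩
  exact hu

lemma card_filter_mk_mem {G : Type*} [Group G] [Fintype G] (H : Subgroup G)
    [DecidableEq (G ⧸ H)] (s : Finset (G ⧸ H)) :
    #{x : G | (x : G ⧸ H) ∈ s} = Nat.card H * #s := by
  have h := QuotientGroup.card_preimage_mk H s
  rw [Nat.card_eq_card_toFinset, Nat.card_eq_card_toFinset, Finset.toFinset_coe] at h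
  convert h using 2
  ext x
  simp

section GroupRing

variable {G : Type*} [Group G] [DecidableEq G]

lemma coeff_fsum (s : Finset G) (g : G) : (fsum s).coeff g = if g ∈ s then 1 else 0 := by
  simp [fsum, MonoidAlgebra.coeff_sum, Finsupp.finsetSum_apply, MonoidAlgebra.coeff_single,
    Finsupp.single_apply]

lemma coeff_fsum_mul_fsum_inv (D : Finset G) (g : G) :
    (fsum D * fsum D⁻¹).coeff g = #{a ∈ D | g⁻¹ * a ∈ D} := by
  have hinv : fsum D⁻¹ = ∑ b ∈ D, MonoidAlgebra.single b⁻¹ (1 : ℤ) := by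
    rw [fsum, Finset.inv_def, Finset.sum_image fun x _ y _ h => inv_injective h]
  rw [fsum, hinv, Finset.sum_mul_sum, MonoidAlgebra.coeff_sum, Finsupp.finsetSum_apply,
    Finset.card_filter, Nat.cast_sum]
  refine Finset.sum_congr rfl fun a _ => ?_
  simp only [MonoidAlgebra.single_mul_single, one_mul, MonoidAlgebra.coeff_sum,
    Finsupp.finsetSum_apply, MonoidAlgebra.coeff_single, Finsupp.single_apply]
  have hsolve : ∀ b, a * b⁻¹ = g ↔ g⁻¹ * a = b := fun b => by
    rw [mul_inv_eq_iff_eq_mul, inv_mul_eq_iff_eq_mul, eq_comm]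
  simp [hsolve]

end GroupRing

section Trace

open Algebra

variable {K F : Type*} [Field K] [Field F] [Algebra K F] [FiniteDimensional K F]
  [Algebra.IsSeparable K F]

lemma exists_trace_eq_zero_and_trace_mul_ne_zero {v : F} (hv : v ∉ Set.range (algebraMap K F)) :
    ∃ w, trace K F w = 0 ∧ trace K F (v * w) ≠ 0 := by
  obtain ⟨e, he⟩ := trace_surjective K F 1
  by_contra! h
  -- `Tr (v ·)` vanishes on `ker Tr`, hence equals `c • Tr`; then `Tr ((v - c) ·) = 0`.
  set c := trace K F (v * e)
  have hmul : ∀ x, trace K F ((v - algebraMap K F c) * x) = 0 := fun x => by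
    have hx := h (x - trace K F x • e) (by simp [he])
    simp only [mul_sub, mul_smul_comm, map_sub, map_smul, smul_eq_mul] at hx
    simp only [sub_mul, map_sub, ← Algebra.smul_def, map_smul, smul_eq_mul]
    linear_combination hx
  have hvc : v - algebraMap K F c ≠ 0 := sub_ne_zero.mpr fun h => hv ⟨c, h.symm⟩
  simpa [he, mul_inv_cancel_left₀ hvc] using hmul ((v - algebraMap K F c)⁻¹ * e)

lemma surjective_trace_prod_trace_mulLeft {v : F} (hv : v ∉ Set.range (algebraMap K F)) :
    Function.Surjective ((trace K F).prod ((trace K F).comp (LinearMap.mulLeft K v))) := by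
  obtain ⟨e, he⟩ := trace_surjective K F 1
  obtain ⟨w, hw₀, hw⟩ := exists_trace_eq_zero_and_trace_mul_ne_zero hv
  rintro ⟨a, b⟩
  refine ⟨a • e + ((b - a * trace K F (v * e)) / trace K F (v * w)) • w, Prod.ext ?_ ?_⟩
  · simp [he, hw₀]
  · simp only [map_add, map_smul, Prod.snd_add, Prod.smul_snd, LinearMap.prod_apply,
      Function.prod, LinearMap.comp_apply, LinearMap.mulLeft_apply, smul_eq_mul]
    field_simp
    ring

end Trace

section FiniteField

open Algebra

variable {K F : Type*} [Field K] [Field F] [Fintype K] [Fintype F] [Algebra K F]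

lemma card_filter_ne_zero : #{c : K | c ≠ 0} = Fintype.card K - 1 := by
  rw [Finset.filter_ne', Finset.card_erase_of_mem (Finset.mem_univ _), Finset.card_univ]

lemma card_filter_fst_ne_zero_and_snd_ne_zero :
    #{m : K × K | m.1 ≠ 0 ∧ m.2 ≠ 0} = (Fintype.card K - 1) ^ 2 := by
  rw [← Finset.univ_product_univ, Finset.filter_product (· ≠ 0) (· ≠ 0), Finset.card_product,
    card_filter_ne_zero, sq]

lemma card_trace_ne_zero_and_trace_algebraMap_mul_ne_zero {c : K} (hc : c ≠ 0) :
    #{x : F | trace K F x ≠ 0 ∧ trace K F (algebraMap K F c * x) ≠ 0} * Fintype.card K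
      = (Fintype.card K - 1) * Fintype.card F := by
  simp only [← Algebra.smul_def, map_smul, smul_eq_mul, ne_eq, mul_eq_zero, hc, false_or,
    and_self]
  rw [card_filter_comp_mul_card_of_surjective (trace K F) (trace_surjective K F) (· ≠ 0),
    card_filter_ne_zero]

lemma card_trace_ne_zero_and_trace_mul_ne_zero {v : F} (hv : v ∉ Set.range (algebraMap K F)) :
    #{x : F | trace K F x ≠ 0 ∧ trace K F (v * x) ≠ 0} * Fintype.card K ^ 2
      = (Fintype.card K - 1) ^ 2 * Fintype.card F := by
  have h := card_filter_comp_mul_card_of_surjective _ (surjective_trace_prod_trace_mulLeft hv)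
    (fun m : K × K => m.1 ≠ 0 ∧ m.2 ≠ 0)
  rw [Fintype.card_prod, ← sq, card_filter_fst_ne_zero_and_snd_ne_zero] at h
  simpa using h

end FiniteField

section BaseSubgroup

variable {K F : Type*} [Field K] [Field F] [Algebra K F]

lemma mem_baseSubgroup_iff {v : Fˣ} :
    v ∈ baseSubgroup K F ↔ (v : F) ∈ Set.range (algebraMap K F) := by
  refine ⟨fun ⟨c, hc⟩ => ⟨c, by rw [← hc]; rfl⟩, fun ⟨c, hc⟩ => ?_⟩
  have hc0 : c ≠ 0 := by
    rintro rfl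
    exact v.ne_zero (by rw [← hc, map_zero])
  exact ⟨Units.mk0 c hc0, Units.ext hc⟩

lemma mk_eq_mk_iff_exists_algebraMap_mul {x y : Fˣ} :
    (x : Fˣ ⧸ baseSubgroup K F) = y ↔ ∃ c : K, (y : F) = algebraMap K F c * x := by
  rw [QuotientGroup.eq, mem_baseSubgroup_iff]
  refine exists_congr fun c => ?_
  rw [Units.val_mul, Units.eq_inv_mul_iff_mul_eq, mul_comm, eq_comm]

lemma card_baseSubgroup [Fintype K] : Nat.card (baseSubgroup K F) = Fintype.card K - 1 := by
  rw [baseSubgroup, ← Nat.card_congr (MonoidHom.ofInjective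
      (Units.map_injective (algebraMap K F).injective)).toEquiv, Nat.card_eq_fintype_card,
    Fintype.card_units]

lemma card_quotient_baseSubgroup [Fintype K] [Fintype F] {q l : ℕ} (hq : Fintype.card K = q)
    (hF : Fintype.card F = q ^ l) :
    Fintype.card (Fˣ ⧸ baseSubgroup K F) = (q ^ l - 1) / (q - 1) := by
  have hq2 : 2 ≤ q := hq ▸ Fintype.one_lt_card
  have h := Subgroup.card_eq_card_quotient_mul_card_subgroup (baseSubgroup K F)
  rw [Nat.card_eq_fintype_card, Fintype.card_units, hF, card_baseSubgroup, hq,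
    Nat.card_eq_fintype_card] at h
  rw [h, Nat.mul_div_cancel _ (by omega)]

end BaseSubgroup

section Singer

open Algebra

variable {K F : Type*} [Field K] [Field F] [Fintype K] [Fintype F] [Algebra K F] {q l : ℕ}

lemma relTrace_eq_algebraMap_trace (hq : Fintype.card K = q) (hF : Fintype.card F = q ^ l)
    (x : F) : relTrace q l x = algebraMap K F (trace K F x) := by
  have hl : Module.finrank K F = l :=
    Nat.pow_right_injective (hq ▸ Fintype.one_lt_card) (by
      simp only [← hq, ← Module.card_eq_pow_finrank, hF])
  rw [FiniteField.algebraMap_trace_eq_sum_pow, hl, Nat.card_eq_fintype_card, hq, relTrace]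

lemma mk_mem_singerDS_iff (hq : Fintype.card K = q) (hF : Fintype.card F = q ^ l) (x : Fˣ) :
    (x : Fˣ ⧸ baseSubgroup K F) ∈ singerDS K F q l ↔ trace K F x ≠ 0 := by
  simp only [singerDS, relTrace_eq_algebraMap_trace hq hF, Finset.mem_image, Finset.mem_filter,
    Finset.mem_univ, true_and, map_eq_one_iff _ (algebraMap K F).injective]
  constructor
  · rintro ⟨y, hy, hyx⟩
    obtain ⟨c, hc⟩ := mk_eq_mk_iff_exists_algebraMap_mul.mp hyx
    rw [hc, ← Algebra.smul_def, map_smul, hy, smul_eq_mul, mul_one]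
    rintro rfl
    exact x.ne_zero (by rw [hc, map_zero, zero_mul])
  · intro hx
    have hy : algebraMap K F (trace K F x)⁻¹ * x ≠ 0 := by simp [hx]
    refine ⟨Units.mk0 _ hy, ?_, mk_eq_mk_iff_exists_algebraMap_mul.mpr ⟨trace K F x, ?_⟩⟩
    · rw [Units.val_mk0, ← Algebra.smul_def, map_smul, smul_eq_mul, inv_mul_cancel₀ hx]
    · rw [Units.val_mk0, ← mul_assoc, ← map_mul, mul_inv_cancel₀ hx, map_one, one_mul]

lemma mul_card_filter_inv_mk_mul_mem_singerDS (hq : Fintype.card K = q)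
    (hF : Fintype.card F = q ^ l) (u : Fˣ) :
    (q - 1) * #{a ∈ singerDS K F q l | (u : Fˣ ⧸ baseSubgroup K F)⁻¹ * a ∈ singerDS K F q l} =
      #{x : F | trace K F x ≠ 0 ∧ trace K F ((u⁻¹ : Fˣ) * x) ≠ 0} := by
  have h := card_filter_mk_mem (baseSubgroup K F)
    {a ∈ singerDS K F q l | (u : Fˣ ⧸ baseSubgroup K F)⁻¹ * a ∈ singerDS K F q l}
  rw [card_baseSubgroup, hq] at h
  rw [← h, ← card_filter_units_val
    (p := fun x : F => trace K F x ≠ 0 ∧ trace K F ((u⁻¹ : Fˣ) * x) ≠ 0) (by simp)]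
  refine congrArg Finset.card (Finset.filter_congr fun x _ => ?_)
  rw [Finset.mem_filter, ← QuotientGroup.mk_inv, ← QuotientGroup.mk_mul,
    mk_mem_singerDS_iff hq hF, mk_mem_singerDS_iff hq hF, Units.val_mul]

lemma card_filter_inv_mul_mem_singerDS (hq : Fintype.card K = q) (hF : Fintype.card F = q ^ l)
    (hl : 2 ≤ l) (g : Fˣ ⧸ baseSubgroup K F) :
    #{a ∈ singerDS K F q l | g⁻¹ * a ∈ singerDS K F q l} =
      if g = 1 then q ^ (l - 1) else q ^ (l - 2) * (q - 1) := by
  obtain ⟨u, rfl⟩ := QuotientGroup.mk_surjective g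
  have hq2 : 2 ≤ q := hq ▸ Fintype.one_lt_card
  have hpreimage := mul_card_filter_inv_mk_mul_mem_singerDS hq hF u
  obtain ⟨m, rfl⟩ : ∃ m, l = m + 2 := ⟨l - 2, by omega⟩
  simp only [Nat.add_sub_cancel, show m + 2 - 1 = m + 1 by omega]
  split_ifs with hu
  · obtain ⟨c, hc⟩ := mem_baseSubgroup_iff.mp (inv_mem ((QuotientGroup.eq_one_iff u).mp hu))
    have hN := card_trace_ne_zero_and_trace_algebraMap_mul_ne_zero (F := F)
      (c := c) (by rintro rfl; exact (u⁻¹).ne_zero (by rw [← hc, map_zero]))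
    rw [hc, ← hpreimage, hq, hF] at hN
    refine Nat.eq_of_mul_eq_mul_left (Nat.mul_pos (by omega : 0 < q - 1) (by omega : 0 < q)) ?_
    convert hN using 1 <;> ring
  · have hv : ((u⁻¹ : Fˣ) : F) ∉ Set.range (algebraMap K F) := fun hv =>
      hu ((QuotientGroup.eq_one_iff u).mpr (inv_mem_iff.mp (mem_baseSubgroup_iff.mpr hv)))
    have hN := card_trace_ne_zero_and_trace_mul_ne_zero hv
    rw [← hpreimage, hq, hF] at hN
    refine Nat.eq_of_mul_eq_mul_left
      (Nat.mul_pos (by omega : 0 < q - 1) (by positivity : 0 < q ^ 2)) ?_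
    convert hN using 1 <;> ring

end Singer

/-- the Singer difference set is a
`((q^l-1)/(q-1), q^{l-1}, q^{l-2}(q-1))`-difference set in `𝔽_{q^l}^*/𝔽_q^*`. -/
theorem stmt7 {K F : Type*} [Field K] [Field F] [Fintype K] [Fintype F]
    [Algebra K F] (q l : ℕ) (hq : Fintype.card K = q)
    (hF : Fintype.card F = q ^ l) (hl : 2 ≤ l) :
    (singerDS K F q l).card = q ^ (l - 1) ∧
    Fintype.card (Fˣ ⧸ baseSubgroup K F) = (q ^ l - 1) / (q - 1) ∧
    fsum (singerDS K F q l) * fsum (singerDS K F q l)⁻¹ =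
      ((q : ℤ) ^ (l - 2)) • 1 +
        ((q : ℤ) ^ (l - 2) * ((q : ℤ) - 1)) •
          fsum (univ : Finset (Fˣ ⧸ baseSubgroup K F)) := by
  have hcount := card_filter_inv_mul_mem_singerDS hq hF hl
  refine ⟨by simpa using hcount 1, card_quotient_baseSubgroup hq hF, ?_⟩
  ext g
  have hq1 : 1 ≤ q := hq ▸ Fintype.card_pos
  obtain ⟨m, rfl⟩ : ∃ m, l = m + 2 := ⟨l - 2, by omega⟩
  rw [coeff_fsum_mul_fsum_inv, hcount g, MonoidAlgebra.coeff_add, MonoidAlgebra.coeff_smul,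
    MonoidAlgebra.coeff_smul, MonoidAlgebra.one_def, MonoidAlgebra.coeff_single]
  by_cases hg : g = 1
  · simp [hg, coeff_fsum, pow_succ, mul_sub]
  · simp [hg, coeff_fsum, Nat.cast_sub hq1]
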